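/- A transfinite rewrite sequence (t_β →_{p_β} t_{β+1})_{β<α} (satisfying the convergence conditions at all limit ordinals λ < α) is divergent if and only if there exists n ∈ ℕ such that the set of indices β < α with |p_β| = n is infinite. -/

import Mathlib

open Relation

/-- A signature: a type of function symbols together with an arity for each symbol. -/
structure Signature where
  Sym : Type
  ar : Sym → ℕ

/-- The polynomial functor whose final coalgebra is the set of (finite and infinite)
terms over the signature `Sg` and the set `X` of variables. -/
def TermF (Sg : Signature) (X : Type) : PFunctor.{0} :=
  ⟨X ⊕ Sg.Sym, fun a => Sum.rec (fun _ => Empty) (fun f => Fin (Sg.ar f)) a⟩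

/-- The set `T` of finite and infinite terms over `Sg` and `X`, defined coinductively
(as the final coalgebra, i.e. the M-type, of `TermF Sg X`). -/
def Tm (Sg : Signature) (X : Type) : Type := PFunctor.M (TermF Sg X)

variable {Sg : Signature} {X : Type}

/-- The term consisting of a single variable. -/
def Tm.var (x : X) : Tm Sg X := PFunctor.M.mk ⟨Sum.inl x, Empty.elim⟩

/-- The term `f(t₁,…,tₙ)` with root symbol `f` and arguments `args`. -/
def Tm.node (f : Sg.Sym) (args : Fin (Sg.ar f) → Tm Sg X) : Tm Sg X :=
  PFunctor.M.mk ⟨Sum.inr f, args⟩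

/-- One step of the corecursive definition of substitution:
`Sum.inl t` means `t` still has to be substituted, `Sum.inr t` means `t` is copied. -/
def substAux (σ : X → Tm Sg X) :
    (Tm Sg X ⊕ Tm Sg X) → (TermF Sg X) (Tm Sg X ⊕ Tm Sg X) := fun s =>
  match s with
  | Sum.inl t =>
    match PFunctor.M.dest t with
    | ⟨Sum.inl x, _⟩ =>
        ⟨(PFunctor.M.dest (σ x)).1, fun b => Sum.inr ((PFunctor.M.dest (σ x)).2 b)⟩
    | ⟨Sum.inr f, k⟩ => ⟨Sum.inr f, fun b => Sum.inl (k b)⟩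
  | Sum.inr t =>
      ⟨(PFunctor.M.dest t).1, fun b => Sum.inr ((PFunctor.M.dest t).2 b)⟩

/-- Application `tσ` of a substitution `σ : X → T` to a term `t`, defined corecursively. -/
def subst (σ : X → Tm Sg X) (t : Tm Sg X) : Tm Sg X :=
  PFunctor.M.corec (substAux σ) (Sum.inl t)

/-- `Occurs x t`: the variable `x` occurs in the term `t`. -/
inductive Occurs (x : X) : Tm Sg X → Prop
  | here {t : Tm Sg X} : t = Tm.var x → Occurs x t
  | deeper {t : Tm Sg X} {f : Sg.Sym} {args : Fin (Sg.ar f) → Tm Sg X}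
      (i : Fin (Sg.ar f)) : t = Tm.node f args → Occurs x (args i) → Occurs x t

/-- A term rewriting system over `Sg` and `X`: a set of rules `ℓ → r` such that
`ℓ` is not a variable and all variables of `r` occur in `ℓ`. -/
structure TRS (Sg : Signature) (X : Type) where
  rules : Set (Tm Sg X × Tm Sg X)
  lhs_not_var : ∀ l r, (l, r) ∈ rules → ∀ x : X, l ≠ Tm.var x
  vars_lhs : ∀ l r, (l, r) ∈ rules → ∀ x : X, Occurs x r → Occurs x l

/-- Relations on terms. -/
abbrev TRel (Sg : Signature) (X : Type) := Tm Sg X → Tm Sg X → Prop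

/-- The root step relation `→ε := {(ℓσ, rσ) | ℓ → r ∈ R, σ a substitution}`. -/
def RootStep (R : TRS Sg X) : TRel Sg X := fun s t =>
  ∃ l r, (l, r) ∈ R.rules ∧ ∃ σ : X → Tm Sg X, s = subst σ l ∧ t = subst σ r

/-- `StepAt Q p s t`: a `Q`-step at position `p`, i.e. `s = C[u]`, `t = C[v]` with
`(u,v) ∈ Q` and `C` a one-hole context whose hole is at position `p`. -/
inductive StepAt (Q : TRel Sg X) : List ℕ → Tm Sg X → Tm Sg X → Prop
  | here {s t : Tm Sg X} : Q s t → StepAt Q [] s t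
  | deeper {f : Sg.Sym} {ss ts : Fin (Sg.ar f) → Tm Sg X} (i : Fin (Sg.ar f))
      {p : List ℕ} : StepAt Q p (ss i) (ts i) → (∀ j, j ≠ i → ss j = ts j) →
      StepAt Q ((i : ℕ) :: p) (Tm.node f ss) (Tm.node f ts)

/-- The one-step rewrite relation `→` of a TRS: a root step applied inside a
one-hole context. -/
def Step (R : TRS Sg X) : TRel Sg X := fun s t => ∃ p, StepAt (RootStep R) p s t

/-- The lifting `↓R` of a relation `R`:
`↓R := {(f(s₁,…,sₙ), f(t₁,…,tₙ)) | f ∈ Σ, s₁ R t₁, …, sₙ R tₙ} ∪ Id`. -/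
def liftRel (R : TRel Sg X) : TRel Sg X := fun s t =>
  s = t ∨ ∃ (f : Sg.Sym) (ss ts : Fin (Sg.ar f) → Tm Sg X),
    s = Tm.node f ss ∧ t = Tm.node f ts ∧ ∀ i, R (ss i) (ts i)

lemma liftRel_mono : Monotone (liftRel (Sg := Sg) (X := X)) := by
  intro R S h s t hst
  rcases hst with h1 | ⟨f, ss, ts, rfl, rfl, hi⟩
  · exact Or.inl h1
  · exact Or.inr ⟨f, ss, ts, rfl, rfl, fun i => h _ _ (hi i)⟩

/-- Relational composition `r ∘ s`. -/
def relComp (r s : TRel Sg X) : TRel Sg X := fun a c => ∃ b, r a b ∧ s b c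

/-- The monotone operator `S ↦ (→ε ∪ ↓R)* ∘ ↓S` (for a fixed `R`). -/
def iredInnerHom (R : TRS Sg X) (U : TRel Sg X) : TRel Sg X →o TRel Sg X where
  toFun S := relComp
    (ReflTransGen (fun s t => RootStep R s t ∨ liftRel U s t)) (liftRel S)
  monotone' := by
    intro S S' h a c hac
    rcases hac with ⟨b, h1, h2⟩
    exact ⟨b, h1, liftRel_mono h _ _ h2⟩

/-- The monotone operator `R ↦ νS.((→ε ∪ ↓R)* ∘ ↓S)`. -/
def iredHom (R : TRS Sg X) : TRel Sg X →o TRel Sg X where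
  toFun U := OrderHom.gfp (iredInnerHom R U)
  monotone' := by
    intro U V h
    apply OrderHom.gfp.monotone
    intro S a c hac
    rcases hac with ⟨b, h1, h2⟩
    refine ⟨b, ?_, h2⟩
    refine Relation.ReflTransGen.mono ?_ _ _ h1
    intro x y hxy
    exact hxy.imp id (fun h' => liftRel_mono h _ _ h')

/-- The infinitary rewrite relation `→∞ := μR.νS.((→ε ∪ ↓R)* ∘ ↓S)`. -/
def ired (R : TRS Sg X) : TRel Sg X := OrderHom.lfp (iredHom R)

/-- The monotone operator `R' ↦ (→ε ∪ ↓R')*`. -/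
def biHom (R : TRS Sg X) : TRel Sg X →o TRel Sg X where
  toFun U := ReflTransGen (fun s t => RootStep R s t ∨ liftRel U s t)
  monotone' := by
    intro U V h a b hab
    refine Relation.ReflTransGen.mono ?_ _ _ hab
    intro x y hxy
    exact hxy.imp id (fun h' => liftRel_mono h _ _ h')

/-- The bi-infinite rewrite relation `∞→ := νR.(→ε ∪ ↓R)*`. -/
def bired (R : TRS Sg X) : TRel Sg X := OrderHom.gfp (biHom R)

/-- The monotone operator `R' ↦ (←ε ∪ →ε ∪ ↓R')*`. -/
def ieqHom (R : TRS Sg X) : TRel Sg X →o TRel Sg X where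
  toFun U := ReflTransGen (fun s t => RootStep R t s ∨ RootStep R s t ∨ liftRel U s t)
  monotone' := by
    intro U V h a b hab
    refine Relation.ReflTransGen.mono ?_ _ _ hab
    intro x y hxy
    exact hxy.imp id (fun h' => h'.imp id (fun h'' => liftRel_mono h _ _ h''))

/-- The infinitary equational reasoning relation `=∞ := νR.(←ε ∪ →ε ∪ ↓R)*`. -/
def ieq (R : TRS Sg X) : TRel Sg X := OrderHom.gfp (ieqHom R)

/-- `Agree n s t`: the terms `s` and `t` coincide up to depth `n`
(i.e. `d(s,t) ≤ 2^{-n}` for the standard metric `d`). -/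
def Agree : ℕ → Tm Sg X → Tm Sg X → Prop
  | 0, _, _ => True
  | n + 1, s, t =>
      (∃ x : X, s = Tm.var x ∧ t = Tm.var x) ∨
      ∃ (f : Sg.Sym) (ss ts : Fin (Sg.ar f) → Tm Sg X),
        s = Tm.node f ss ∧ t = Tm.node f ts ∧ ∀ i, Agree n (ss i) (ts i)

/-- `ConvTo t p l tl`: as `β` approaches the ordinal `l` from below,
`d(t β, tl)` tends to `0` and the depth `|p β|` tends to infinity. -/
def ConvTo (t : Ordinal.{0} → Tm Sg X) (p : Ordinal.{0} → List ℕ) (l : Ordinal.{0})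
    (tl : Tm Sg X) : Prop :=
  (∀ n : ℕ, ∃ β₀ < l, ∀ β, β₀ ≤ β → β < l → Agree n (t β) tl) ∧
  (∀ n : ℕ, ∃ β₀ < l, ∀ β, β₀ ≤ β → β < l → n ≤ (p β).length)

/-- A transfinite sequence of `Q`-steps `(t_β →_{p_β} t_{β+1})_{β<α}` of ordinal
length `α`, weakly continuous and with depths tending to infinity at every limit
ordinal `λ < α`. -/
structure TransSeq (Q : TRel Sg X) (α : Ordinal.{0}) where
  t : Ordinal.{0} → Tm Sg X
  pos : Ordinal.{0} → List ℕ
  step : ∀ β < α, StepAt Q (pos β) (t β) (t (β + 1))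
  conv : ∀ l < α, Order.IsSuccLimit l → ConvTo t pos l (t l)

/-- A transfinite rewrite sequence is strongly convergent if its length is a successor
ordinal (or zero), or there exists a final term to which it converges (with depths
tending to infinity) at the limit. -/
def TransSeq.StronglyConvergent {Q : TRel Sg X} {α : Ordinal.{0}} (s : TransSeq Q α) : Prop :=
  Order.IsSuccLimit α → ∃ tl, ConvTo s.t s.pos α tl

/-- `SCRed Q s t`: there is a strongly convergent transfinite sequence of `Q`-steps
from `s` to `t`. -/
def SCRed (Q : TRel Sg X) : TRel Sg X := fun a b =>
  ∃ (α : Ordinal.{0}) (s : TransSeq Q α), s.t 0 = a ∧ s.t α = b ∧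
    (Order.IsSuccLimit α → ConvTo s.t s.pos α b)

/-- The standard, ordinal-based infinitary rewrite relation `→∞_ord`:
strongly convergent transfinite rewrite sequences. -/
def iredOrd (R : TRS Sg X) : TRel Sg X := SCRed (RootStep R)

-- auxiliary facts about the term constructors
lemma node_ne_var (f : Sg.Sym) (args : Fin (Sg.ar f) → Tm Sg X) (x : X) :
    Tm.node f args ≠ Tm.var x := by
  intro h
  have h1 := congrArg (fun u => (PFunctor.M.dest u).1) h
  simp only [Tm.node, Tm.var, PFunctor.M.dest_mk] at h1
  exact Sum.inr_ne_inl h1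

lemma node_inj_sym {f g : Sg.Sym} {ss : Fin (Sg.ar f) → Tm Sg X}
    {ts : Fin (Sg.ar g) → Tm Sg X} (h : Tm.node f ss = Tm.node g ts) : f = g := by
  have h1 := congrArg (fun u => (PFunctor.M.dest u).1) h
  simp only [Tm.node, PFunctor.M.dest_mk] at h1
  exact Sum.inr.inj h1

lemma node_inj_args {f : Sg.Sym} {ss ts : Fin (Sg.ar f) → Tm Sg X}
    (h : Tm.node f ss = Tm.node f ts) : ss = ts := by
  have h' : (PFunctor.M.mk ⟨Sum.inr f, ss⟩ : Tm Sg X) = PFunctor.M.mk ⟨Sum.inr f, ts⟩ := h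
  have h1 := PFunctor.M.mk_inj h'
  injection h1 with h2 h3

lemma var_inj {x y : X} (h : (Tm.var x : Tm Sg X) = Tm.var y) : x = y := by
  have h1 := congrArg (fun u => (PFunctor.M.dest u).1) h
  simp only [Tm.var, PFunctor.M.dest_mk] at h1
  exact Sum.inl.inj h1

lemma occurs_var_iff {x y : X} : Occurs x (Tm.var y : Tm Sg X) ↔ x = y := by
  constructor
  · intro h
    cases h with
    | here h => exact (var_inj h.symm)
    | deeper i h _ => exact absurd h.symm (node_ne_var _ _ _)
  · rintro rfl
    exact Occurs.here rfl

lemma occurs_node_iff {x : X} {f : Sg.Sym} {args : Fin (Sg.ar f) → Tm Sg X} :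
    Occurs x (Tm.node f args) ↔ ∃ i, Occurs x (args i) := by
  constructor
  · intro h
    cases h with
    | here h => exact absurd h (node_ne_var _ _ _)
    | deeper i h hocc =>
      obtain rfl := node_inj_sym h
      obtain rfl := node_inj_args h
      exact ⟨i, hocc⟩
  · rintro ⟨i, h⟩
    exact Occurs.deeper i rfl h

/-!
If every depth occurs only finitely often before `α`, then for each `n` all steps from some
index on are at depth at least `n`; by transfinite induction (weak continuity at inner limits) the
terms are from there on constant up to depth `n`, and completeness of the term space gives a
limit. Conversely, if depth `n` occurs infinitely often, let `L ≤ α` be least such that it occurs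
infinitely often below `L`. Then `L` is a limit ordinal in which steps at depth `n` are cofinal,
so the depths do not tend to infinity at `L`: this contradicts the convergence condition at `L`
if `L < α`, and strong convergence if `L = α`.
-/

namespace Tm

@[simp]
lemma dest_var (x : X) : PFunctor.M.dest (Tm.var x : Tm Sg X) = ⟨Sum.inl x, Empty.elim⟩ :=
  PFunctor.M.dest_mk _

@[simp]
lemma dest_node (f : Sg.Sym) (args : Fin (Sg.ar f) → Tm Sg X) :
    PFunctor.M.dest (Tm.node f args) = ⟨Sum.inr f, args⟩ :=
  PFunctor.M.dest_mk _

lemma eq_var_of_dest_fst {t : Tm Sg X} {x : X} (h : (PFunctor.M.dest t).1 = Sum.inl x) :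
    t = Tm.var x := by
  rcases hd : PFunctor.M.dest t with ⟨a, k⟩
  obtain rfl : a = Sum.inl x := by rw [← h, hd]
  rw [← PFunctor.M.mk_dest t, hd, Tm.var]
  congr
  funext e
  exact e.elim

lemma eq_node_of_dest {t : Tm Sg X} {f : Sg.Sym} {args : Fin (Sg.ar f) → Tm Sg X}
    (h : PFunctor.M.dest t = ⟨Sum.inr f, args⟩) : t = Tm.node f args := by
  rw [← PFunctor.M.mk_dest t, h]
  rfl

lemma eq_var_or_eq_node (t : Tm Sg X) :
    (∃ x, t = Tm.var x) ∨ ∃ (f : Sg.Sym) (args : Fin (Sg.ar f) → Tm Sg X), t = Tm.node f args := by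
  rcases h : PFunctor.M.dest t with ⟨x | f, k⟩
  · exact Or.inl ⟨x, eq_var_of_dest_fst (by rw [h])⟩
  · exact Or.inr ⟨f, k, eq_node_of_dest h⟩

end Tm

lemma agree_succ_var_left_iff {n : ℕ} {x : X} {t : Tm Sg X} :
    Agree (n + 1) (Tm.var x) t ↔ t = Tm.var x := by
  refine ⟨?_, fun h => Or.inl ⟨x, rfl, h⟩⟩
  rintro (⟨y, hxy, rfl⟩ | ⟨f, ss, ts, h, -, -⟩)
  · rw [var_inj hxy]
  · exact absurd h.symm (node_ne_var _ _ _)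

lemma agree_succ_node_left_iff {n : ℕ} {f : Sg.Sym} {ss : Fin (Sg.ar f) → Tm Sg X}
    {t : Tm Sg X} :
    Agree (n + 1) (Tm.node f ss) t ↔ ∃ ts, t = Tm.node f ts ∧ ∀ i, Agree n (ss i) (ts i) := by
  refine ⟨?_, fun ⟨ts, ht, hi⟩ => Or.inr ⟨f, ss, ts, rfl, ht, hi⟩⟩
  rintro (⟨x, h, -⟩ | ⟨g, ss', ts, h, rfl, hi⟩)
  · exact absurd h (node_ne_var _ _ _)
  · obtain rfl := node_inj_sym h
    obtain rfl := node_inj_args h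
    exact ⟨ts, rfl, hi⟩

namespace Agree

lemma refl : ∀ (n : ℕ) (t : Tm Sg X), Agree n t t
  | 0, _ => trivial
  | n + 1, t => by
    rcases t.eq_var_or_eq_node with ⟨x, rfl⟩ | ⟨f, args, rfl⟩
    · exact agree_succ_var_left_iff.2 rfl
    · exact agree_succ_node_left_iff.2 ⟨args, rfl, fun i => refl n _⟩

lemma symm : ∀ {n : ℕ} {s t : Tm Sg X}, Agree n s t → Agree n t s
  | 0, _, _, _ => trivial
  | _ + 1, _, _, Or.inl ⟨x, hs, ht⟩ => Or.inl ⟨x, ht, hs⟩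
  | _ + 1, _, _, Or.inr ⟨f, ss, ts, hs, ht, hi⟩ => Or.inr ⟨f, ts, ss, ht, hs, fun i => (hi i).symm⟩

lemma trans : ∀ {n : ℕ} {s t u : Tm Sg X}, Agree n s t → Agree n t u → Agree n s u
  | 0, _, _, _, _, _ => trivial
  | _ + 1, _, _, _, Or.inl ⟨_, rfl, rfl⟩, htu => htu
  | _ + 1, _, _, _, Or.inr ⟨_, _, _, rfl, rfl, hi⟩, htu => by
    obtain ⟨us, rfl, hi'⟩ := agree_succ_node_left_iff.1 htu
    exact agree_succ_node_left_iff.2 ⟨us, rfl, fun i => (hi i).trans (hi' i)⟩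

lemma of_succ : ∀ {n : ℕ} {s t : Tm Sg X}, Agree (n + 1) s t → Agree n s t
  | 0, _, _, _ => trivial
  | _ + 1, _, _, Or.inl h => Or.inl h
  | _ + 1, _, _, Or.inr ⟨f, ss, ts, hs, ht, hi⟩ => Or.inr ⟨f, ss, ts, hs, ht, fun i => (hi i).of_succ⟩

lemma of_le {m n : ℕ} (hmn : m ≤ n) {s t : Tm Sg X} (h : Agree n s t) : Agree m s t := by
  induction hmn with
  | refl => exact h
  | step _ ih => exact ih h.of_succ

end Agree

lemma StepAt.agree {Q : TRel Sg X} {p : List ℕ} {s t : Tm Sg X} (h : StepAt Q p s t) :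
    ∀ n ≤ p.length, Agree n s t := by
  induction h with
  | here _ =>
    intro n hn
    obtain rfl := Nat.le_zero.1 hn
    trivial
  | @deeper f ss ts i p _ hother ih =>
    rintro (_ | n) hn
    · trivial
    · refine agree_succ_node_left_iff.2 ⟨ts, rfl, fun j => ?_⟩
      by_cases hj : j = i
      · subst hj
        exact ih n (by simpa using hn)
      · rw [hother j hj]
        exact Agree.refl n _

namespace Tm

/-- The `i`-th argument of a term; out of range, and for variables, the term itself. -/
def child (t : Tm Sg X) (i : ℕ) : Tm Sg X :=
  match PFunctor.M.dest t with
  | ⟨Sum.inl _, _⟩ => t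
  | ⟨Sum.inr f, k⟩ => if h : i < Sg.ar f then k ⟨i, h⟩ else t

@[simp]
lemma child_node (f : Sg.Sym) (args : Fin (Sg.ar f) → Tm Sg X) (i : Fin (Sg.ar f)) :
    (Tm.node f args).child i = args i := by
  simp [child]

/-- The root of `lim u` is read off `u 1`; its `i`-th argument is the limit of the `i`-th
arguments of `u 1, u 2, …`. -/
def limStep (u : ℕ → Tm Sg X) : (TermF Sg X) (ℕ → Tm Sg X) :=
  match PFunctor.M.dest (u 1) with
  | ⟨Sum.inl x, _⟩ => ⟨Sum.inl x, Empty.elim⟩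
  | ⟨Sum.inr f, _⟩ => ⟨Sum.inr f, fun (i : Fin (Sg.ar f)) m => (u (m + 1)).child i⟩

/-- The limit of a sequence of terms in which `u n` and `u m` agree to depth `n` for `n ≤ m`. -/
def lim (u : ℕ → Tm Sg X) : Tm Sg X := PFunctor.M.corec limStep u

lemma dest_lim (u : ℕ → Tm Sg X) :
    PFunctor.M.dest (lim u) = ⟨(limStep u).1, fun i => lim ((limStep u).2 i)⟩ := by
  rw [lim, PFunctor.M.dest_corec]
  rfl

lemma lim_eq_var {u : ℕ → Tm Sg X} {x : X} (hu : ∀ m, u (m + 1) = Tm.var x) :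
    lim u = Tm.var x := by
  apply eq_var_of_dest_fst
  rw [dest_lim, limStep, hu 0, dest_var]

lemma lim_eq_node {u : ℕ → Tm Sg X} {f : Sg.Sym} {ts : ℕ → Fin (Sg.ar f) → Tm Sg X}
    (hu : ∀ m, u (m + 1) = Tm.node f (ts m)) :
    lim u = Tm.node f (fun i => lim (fun m => ts m i)) := by
  apply eq_node_of_dest
  have hstep : limStep u = ⟨Sum.inr f, fun (i : Fin (Sg.ar f)) m => (u (m + 1)).child i⟩ := by
    rw [limStep, show u 1 = _ from hu 0, dest_node]
  rw [dest_lim, hstep]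
  congr 1
  funext i
  simp only [hu]
  exact congrArg lim (funext fun m => child_node f (ts m) i)

lemma agree_lim : ∀ (n : ℕ) (u : ℕ → Tm Sg X),
    (∀ k m, k ≤ m → Agree k (u k) (u m)) → Agree n (u n) (lim u)
  | 0, _, _ => trivial
  | n + 1, u, hu => by
    have hu1 : ∀ m, Agree 1 (u 1) (u (m + 1)) := fun m => hu 1 (m + 1) (by omega)
    rcases (u 1).eq_var_or_eq_node with ⟨x, hx⟩ | ⟨f, args, hf⟩
    · have hvar : ∀ m, u (m + 1) = Tm.var x := fun m =>
        agree_succ_var_left_iff.1 (hx ▸ hu1 m)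
      rw [hvar n, lim_eq_var hvar]
      exact Agree.refl _ _
    · choose ts hts _ using fun m => agree_succ_node_left_iff.1 (hf ▸ hu1 m)
      rw [lim_eq_node hts, hts n]
      refine agree_succ_node_left_iff.2 ⟨_, rfl, fun i => agree_lim n (fun m => ts m i) fun k m hkm => ?_⟩
      have hkm' := hu (k + 1) (m + 1) (by omega)
      rw [hts k, hts m, agree_succ_node_left_iff] at hkm'
      obtain ⟨_, h, hi⟩ := hkm'
      exact node_inj_args h ▸ hi i

end Tm

open Order Set

lemma Order.IsSuccLimit.exists_forall_lt_of_finite {γ : Type*} [LinearOrder γ] [SuccOrder γ]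
    {α : γ} (hα : IsSuccLimit α) {s : Set γ} (hs : s.Finite) (hsα : s ⊆ Iio α) :
    ∃ β₀ < α, ∀ β ∈ s, β < β₀ := by
  obtain ⟨b, hb⟩ := hα.nonempty_Iio
  obtain ⟨m, hm, hmax⟩ := Set.exists_max_image _ id (hs.insert b) (insert_nonempty b s)
  have hmα : m < α := by
    rcases hm with rfl | hm
    exacts [hb, hsα hm]
  exact ⟨succ m, hα.succ_lt hmα, fun β hβ =>
    lt_succ_of_le_of_not_isMax (hmax β (.inr hβ)) hmα.not_isMax⟩

lemma exists_forall_le_of_finite_fibers {γ : Type*} [LinearOrder γ] [SuccOrder γ] {α : γ}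
    (hα : IsSuccLimit α) {f : γ → ℕ} (hf : ∀ n, {β | β < α ∧ f β = n}.Finite) (n : ℕ) :
    ∃ β₀ < α, ∀ β, β₀ ≤ β → β < α → n ≤ f β := by
  have hlow : {β | β < α ∧ f β < n}.Finite :=
    ((Finset.range n).finite_toSet.biUnion fun m _ => hf m).subset fun β ⟨hβα, hfβ⟩ =>
      mem_biUnion (Finset.mem_range.2 hfβ) ⟨hβα, rfl⟩
  obtain ⟨β₀, hβ₀, hlt⟩ := hα.exists_forall_lt_of_finite hlow fun β hβ => hβ.1
  exact ⟨β₀, hβ₀, fun β hβ₀β hβα => not_lt.1 fun hfβ => (hlt β ⟨hβα, hfβ⟩).not_ge hβ₀β⟩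

lemma exists_isSuccLimit_cofinal_of_infinite {γ : Type*} [LinearOrder γ] [WellFoundedLT γ]
    [SuccOrder γ] {S : Set γ} {α : γ} (hS : (S ∩ Iio α).Infinite) :
    ∃ L ≤ α, IsSuccLimit L ∧ ∀ β < L, ∃ s ∈ S, β < s ∧ s < L := by
  obtain ⟨L, hL, hmin⟩ := wellFounded_lt.has_min {l | (S ∩ Iio l).Infinite} ⟨α, hS⟩
  have hcof : ∀ β < L, ∃ s ∈ S, β < s ∧ s < L := by
    intro β hβL
    have hfin : (S ∩ Iic β).Finite :=
      ((not_infinite.1 fun h => hmin β h hβL).insert β).subset fun s ⟨hsS, hsβ⟩ =>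
        hsβ.eq_or_lt.imp id (⟨hsS, ·⟩)
    obtain ⟨s, ⟨hsS, hsL⟩, hsβ⟩ := (hL.sdiff hfin).nonempty
    exact ⟨s, hsS, not_le.1 fun h => hsβ ⟨hsS, h⟩, hsL⟩
  obtain ⟨s, -, hsL⟩ := hL.nonempty
  refine ⟨L, not_lt.1 (hmin α hS), ?_, hcof⟩
  refine IsSuccLimit.mk (not_isMin_of_lt hsL) (isSuccPrelimit_of_succ_lt fun β hβL => ?_)
  obtain ⟨s, -, hβs, hsL⟩ := hcof β hβL
  exact (succ_le_of_lt hβs).trans_lt hsL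

lemma exists_agree_limit_of_cauchy {ι : Type*} [LinearOrder ι] {t : ι → Tm Sg X} {α : ι}
    (h : ∀ n, ∃ β₀ < α, ∀ γ γ', β₀ ≤ γ → γ ≤ γ' → γ' < α → Agree n (t γ) (t γ')) :
    ∃ tl, ∀ n, ∃ β₀ < α, ∀ β, β₀ ≤ β → β < α → Agree n (t β) tl := by
  choose b hbα hb using h
  have hcauchy : ∀ k m, k ≤ m → Agree k (t (b k)) (t (b m)) := by
    intro k m hkm
    rcases le_total (b k) (b m) with h | h
    · exact hb k _ _ le_rfl h (hbα m)
    · exact ((hb m _ _ le_rfl h (hbα k)).of_le hkm).symm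
  exact ⟨Tm.lim fun m => t (b m), fun n => ⟨b n, hbα n, fun β hβ hβα =>
    (hb n _ _ le_rfl hβ hβα).symm.trans (Tm.agree_lim n _ hcauchy)⟩⟩

lemma not_convTo_of_frequently_length_eq {t : Ordinal.{0} → Tm Sg X}
    {p : Ordinal.{0} → List ℕ} {L : Ordinal.{0}} {n : ℕ}
    (h : ∀ β < L, ∃ s, β < s ∧ s < L ∧ (p s).length = n) (tl : Tm Sg X) :
    ¬ ConvTo t p L tl := by
  rintro ⟨-, hdepth⟩
  obtain ⟨β₀, hβ₀, hge⟩ := hdepth (n + 1)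
  obtain ⟨s, hβ₀s, hsL, hs⟩ := h β₀ hβ₀
  have := hge s hβ₀s.le hsL
  omega

namespace TransSeq

variable {Q : TRel Sg X} {α : Ordinal.{0}} (seq : TransSeq Q α)

lemma agree_of_forall_le_length {n : ℕ} {β₀ : Ordinal.{0}}
    (hdepth : ∀ β, β₀ ≤ β → β < α → n ≤ (seq.pos β).length) {γ : Ordinal.{0}} (hγ : β₀ ≤ γ)
    (γ' : Ordinal.{0}) : γ ≤ γ' → γ' < α → Agree n (seq.t γ) (seq.t γ') := by
  induction γ' using Ordinal.limitRecOn with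
  | zero =>
    intro hγ0 _
    rw [nonpos_iff_eq_zero.1 hγ0]
    exact Agree.refl n _
  | add_one δ ih =>
    intro hγδ hδα
    rcases hγδ.eq_or_lt with rfl | hlt
    · exact Agree.refl n _
    · have hγδ : γ ≤ δ := Order.lt_add_one_iff.1 hlt
      have hδα : δ < α := (Order.lt_add_one_iff.2 le_rfl).trans hδα
      exact (ih hγδ hδα).trans ((seq.step δ hδα).agree n (hdepth δ (hγ.trans hγδ) hδα))
  | limit l hl ih =>
    intro hγl hlα
    rcases hγl.eq_or_lt with rfl | hlt
    · exact Agree.refl n _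
    · obtain ⟨β₁, hβ₁, hnear⟩ := (seq.conv l hlα hl).1 n
      have hβ : max γ β₁ < l := max_lt hlt hβ₁
      exact (ih _ hβ (le_max_left _ _) (hβ.trans hlα)).trans (hnear _ (le_max_right _ _) hβ)

lemma stronglyConvergent_of_finite_length_fibers
    (hfin : ∀ n, {β | β < α ∧ (seq.pos β).length = n}.Finite) : seq.StronglyConvergent := by
  intro hα
  have hdepth := exists_forall_le_of_finite_fibers hα hfin
  obtain ⟨tl, htl⟩ := exists_agree_limit_of_cauchy fun n => by
    obtain ⟨β₀, hβ₀, h⟩ := hdepth n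
    exact ⟨β₀, hβ₀, fun γ γ' hγ => seq.agree_of_forall_le_length h hγ γ'⟩
  exact ⟨tl, htl, hdepth⟩

lemma not_stronglyConvergent_of_infinite_length_fiber {n : ℕ}
    (hinf : {β | β < α ∧ (seq.pos β).length = n}.Infinite) : ¬ seq.StronglyConvergent := by
  intro hSC
  obtain ⟨L, hLα, hL, hcof⟩ := exists_isSuccLimit_cofinal_of_infinite
    (hinf.mono fun β (hβ : β < α ∧ _) => (⟨hβ.2, hβ.1⟩ : β ∈ {β | (seq.pos β).length = n} ∩ Iio α))
  have hfreq : ∀ β < L, ∃ s, β < s ∧ s < L ∧ (seq.pos s).length = n := fun β hβ => by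
    obtain ⟨s, hs, hβs, hsL⟩ := hcof β hβ
    exact ⟨s, hβs, hsL, hs⟩
  rcases hLα.lt_or_eq with hLα | rfl
  · exact not_convTo_of_frequently_length_eq hfreq _ (seq.conv L hLα hL)
  · obtain ⟨tl, htl⟩ := hSC hL
    exact not_convTo_of_frequently_length_eq hfreq tl htl

end TransSeq

theorem divergent_iff_infinitely_many_steps_at_some_depth_general (Sg : Signature) (X : Type)
    (R : TRS Sg X) (α : Ordinal.{0}) (seq : TransSeq (RootStep R) α) :
    ¬ seq.StronglyConvergent ↔
      ∃ n : ℕ, {β : Ordinal.{0} | β < α ∧ (seq.pos β).length = n}.Infinite := by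
  refine ⟨fun hdiv => ?_, fun ⟨n, hinf⟩ => seq.not_stronglyConvergent_of_infinite_length_fiber hinf⟩
  by_contra! hfin
  exact hdiv (seq.stronglyConvergent_of_finite_length_fibers hfin)

/-- A transfinite rewrite sequence `(t_β →_{p_β} t_{β+1})_{β<α}`
(satisfying the convergence conditions at all limit ordinals `λ < α`) is divergent
if and only if for some `n ∈ ℕ` there are infinitely many steps at depth `n`. -/
theorem divergent_iff_infinitely_many_steps_at_some_depth (Sg : Signature) (X : Type)
    [Infinite X] (R : TRS Sg X) (α : Ordinal.{0}) (seq : TransSeq (RootStep R) α) :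
    ¬ seq.StronglyConvergent ↔
      ∃ n : ℕ, {β : Ordinal.{0} | β < α ∧ (seq.pos β).length = n}.Infinite :=
  divergent_iff_infinitely_many_steps_at_some_depth_general Sg X R α seq
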